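/- PAPAL is not compact: for distinct agents a, b and atom p, the set of L_PAPAL formulas Φ = {[ψ](K_a p → K_b K_a p) : ψ ∈ L_EL⁺} ∪ {¬□⁺(K_a p → K_b K_a p)} is unsatisfiable (no pointed epistemic model satisfies all of Φ), while every finite subset of Φ is satisfiable. -/

import Mathlib

/-- An epistemic (S5) model: a nonempty set of states, an equivalence
relation for each agent, and a valuation of atoms. -/
structure EpiModel (A P : Type) where
  S : Type
  ne : Nonempty S
  rel : A → S → S → Prop
  equiv : ∀ a, Equivalence (rel a)
  val : P → Set S

/-- Positive formulas L_EL⁺ : p | ¬p | ∧ | ∨ | K_a. -/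
inductive PosForm (A P : Type) where
  | atom : P → PosForm A P
  | natom : P → PosForm A P
  | and : PosForm A P → PosForm A P → PosForm A P
  | or : PosForm A P → PosForm A P → PosForm A P
  | know : A → PosForm A P → PosForm A P

/-- Satisfaction of a positive formula, relativized to a current domain `D`
(representing the submodel of `M` induced by `D`). -/
def PosForm.sat {A P : Type} (M : EpiModel A P) : PosForm A P → Set M.S → M.S → Prop
  | .atom p, _, s => s ∈ M.val p
  | .natom p, _, s => s ∉ M.val p
  | .and φ ψ, D, s => PosForm.sat M φ D s ∧ PosForm.sat M ψ D s
  | .or φ ψ, D, s => PosForm.sat M φ D s ∨ PosForm.sat M ψ D s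
  | .know a φ, D, s => ∀ t, M.rel a s t → t ∈ D → PosForm.sat M φ D t

/-- The language L_PAPAL : atoms, ¬, ∧, K_a, announcements [ψ]φ and the
positive arbitrary-announcement quantifier □⁺. -/
inductive Form (A P : Type) where
  | atom : P → Form A P
  | neg : Form A P → Form A P
  | and : Form A P → Form A P → Form A P
  | know : A → Form A P → Form A P
  | ann : Form A P → Form A P → Form A P
  | pbox : Form A P → Form A P

/-- Satisfaction, relativized to a current domain `D`: `Form.sat M φ D s`
means that φ holds at state `s` of the restriction of `M` to `D`.
Announcement `[ψ]φ` further restricts the domain to the states of `D`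
satisfying ψ; `□⁺φ` quantifies over announcements of positive formulas. -/
def Form.sat {A P : Type} (M : EpiModel A P) : Form A P → Set M.S → M.S → Prop
  | .atom p, _, s => s ∈ M.val p
  | .neg φ, D, s => ¬ Form.sat M φ D s
  | .and φ ψ, D, s => Form.sat M φ D s ∧ Form.sat M ψ D s
  | .know a φ, D, s => ∀ t, M.rel a s t → t ∈ D → Form.sat M φ D t
  | .ann ψ φ, D, s => Form.sat M ψ D s → Form.sat M φ {t | t ∈ D ∧ Form.sat M ψ D t} s
  | .pbox φ, D, s => ∀ χ : PosForm A P, PosForm.sat M χ D s →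
      Form.sat M φ {t | t ∈ D ∧ PosForm.sat M χ D t} s

/-- Truth at a pointed model `M_s`. -/
def Sat {A P : Type} (M : EpiModel A P) (s : M.S) (φ : Form A P) : Prop :=
  Form.sat M φ Set.univ s

def Form.or {A P : Type} (φ ψ : Form A P) : Form A P := .neg (.and (.neg φ) (.neg ψ))
def Form.imp {A P : Type} (φ ψ : Form A P) : Form A P := Form.or (.neg φ) ψ
def Form.iff {A P : Type} (φ ψ : Form A P) : Form A P := .and (Form.imp φ ψ) (Form.imp ψ φ)
def Form.pdia {A P : Type} (φ : Form A P) : Form A P := .neg (.pbox (.neg φ))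
def Form.lknow {A P : Type} (a : A) (φ : Form A P) : Form A P := .neg (.know a (.neg φ))

/-- Validity on the class S5 of all epistemic models. -/
def Valid (A P : Type) (φ : Form A P) : Prop :=
  ∀ (M : EpiModel A P) (s : M.S), Sat M s φ

/-- Embedding of positive formulas into L_PAPAL. -/
def PosForm.toForm {A P : Type} : PosForm A P → Form A P
  | .atom p => .atom p
  | .natom p => .neg (.atom p)
  | .and φ ψ => .and (PosForm.toForm φ) (PosForm.toForm ψ)
  | .or φ ψ => Form.or (PosForm.toForm φ) (PosForm.toForm ψ)
  | .know a φ => .know a (PosForm.toForm φ)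

/-- The formula `K_a p → K_b K_a p`. -/
def mooreLike {A P : Type} (a b : A) (p : P) : Form A P :=
  Form.imp (.know a (.atom p)) (.know b (.know a (.atom p)))

/-- The set Φ = {[ψ](K_a p → K_b K_a p) : ψ ∈ L_EL⁺} ∪ {¬□⁺(K_a p → K_b K_a p)}. -/
def PhiSet {A P : Type} (a b : A) (p : P) : Set (Form A P) :=
  {f | ∃ ψ : PosForm A P, f = .ann (PosForm.toForm ψ) (mooreLike a b p)} ∪
    {.neg (.pbox (mooreLike a b p))}


/-!
□⁺φ is equivalent to the conjunction of all [ψ]φ with ψ positive, hence Φ is unsatisfiable.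

For finite satisfiability take the chain `0 –a– 1 –b– 2 –a– 3 –b– 4 –a– ⋯` on ℕ in which p holds
exactly at 1, 2 and from 2m+4 on, pointed at 2. After an announcement that keeps 0 and 1,
K_a p → K_b K_a p holds at 2 iff 3 survives as well. Up to depth 2m, every positive formula true
at 0 is true at 3, because the p-states from 2m+4 on are out of sight; so every positive
announcement of depth ≤ 2m preserves the formula. On the other hand δ_0 = K_b ¬p,
δ_{j+1} = K_{a or b}(p ∨ δ_j) (alternating) all hold at 0, while δ_{2m} fails at 3, which sees
the p-state 2m+4 along the ¬p-states 3, …, 2m+3. So announcing p ∨ δ_{2m}, of depth 2m+1,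
removes 3 but keeps 0, 1 and 2.
-/

section

variable {A P : Type}

namespace EpiModel

abbrev ofClasses {S κ : Type} [Nonempty S] (cls : A → S → κ) (val : P → Set S) : EpiModel A P where
  S := S
  ne := ‹_›
  rel c x y := cls c x = cls c y
  equiv _ := ⟨fun _ => rfl, Eq.symm, Eq.trans⟩
  val := val

/-- `R k x y` lets positive formulas of depth at most `k` pass from `x` to `y`: since `K_c` is a
box, every `c`-successor of `y` has to be matched by one of `x`. -/
structure BoundedSim (M : EpiModel A P) (R : ℕ → M.S → M.S → Prop) : Prop where
  mem_val_iff {k : ℕ} {x y : M.S} : R k x y → ∀ q, x ∈ M.val q ↔ y ∈ M.val q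
  back {k : ℕ} {x y : M.S} : R (k + 1) x y →
    ∀ c y', M.rel c y y' → ∃ x', M.rel c x x' ∧ R k x' y'

end EpiModel

namespace PosForm

def depth : PosForm A P → ℕ
  | atom _ | natom _ => 0
  | and φ ψ | or φ ψ => max φ.depth ψ.depth
  | know _ φ => φ.depth + 1

theorem toForm_injective : Function.Injective (toForm : PosForm A P → Form A P) := by
  intro φ ψ h
  induction φ generalizing ψ with
  | and φ₁ φ₂ ih₁ ih₂ | or φ₁ φ₂ ih₁ ih₂ =>
    cases ψ <;>
      simp only [toForm, Form.or, Form.neg.injEq, Form.and.injEq, reduceCtorEq] at h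
    rw [ih₁ h.1, ih₂ h.2]
  | know c φ ih =>
    cases ψ <;> simp only [toForm, Form.or, Form.know.injEq, reduceCtorEq] at h
    rw [h.1, ih h.2]
  | _ => cases ψ <;> simp_all [toForm, Form.or]

theorem sat_toForm (M : EpiModel A P) (φ : PosForm A P) (D : Set M.S) (s : M.S) :
    Form.sat M φ.toForm D s ↔ PosForm.sat M φ D s := by
  induction φ generalizing s with
  | or φ ψ ihφ ihψ => simp only [toForm, Form.or, Form.sat, PosForm.sat, ihφ, ihψ]; tauto
  | _ => simp_all [toForm, Form.sat, PosForm.sat]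

theorem sat_of_boundedSim {M : EpiModel A P} {R : ℕ → M.S → M.S → Prop} (hR : M.BoundedSim R)
    (φ : PosForm A P) {k : ℕ} {x y : M.S} (hxy : R k x y) (hk : φ.depth ≤ k)
    (hx : PosForm.sat M φ Set.univ x) : PosForm.sat M φ Set.univ y := by
  induction φ generalizing k x y with
  | atom q => exact (hR.mem_val_iff hxy q).1 hx
  | natom q => exact mt (hR.mem_val_iff hxy q).2 hx
  | and φ ψ ihφ ihψ =>
    exact ⟨ihφ hxy (le_of_max_le_left hk) hx.1, ihψ hxy (le_of_max_le_right hk) hx.2⟩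
  | or φ ψ ihφ ihψ =>
    exact hx.imp (ihφ hxy (le_of_max_le_left hk)) (ihψ hxy (le_of_max_le_right hk))
  | know c φ ih =>
    cases k with
    | zero => simp [depth] at hk
    | succ k =>
      intro y' hyy' _
      obtain ⟨x', hxx', hx'y'⟩ := hR.back hxy c y' hyy'
      exact ih hx'y' (by simpa [depth] using hk) (hx x' hxx' trivial)

end PosForm

namespace Form

theorem sat_imp (M : EpiModel A P) (φ ψ : Form A P) (D : Set M.S) (s : M.S) :
    Form.sat M (φ.imp ψ) D s ↔ (Form.sat M φ D s → Form.sat M ψ D s) := by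
  simp only [imp, Form.or, Form.sat]
  tauto

theorem sat_pbox_iff (M : EpiModel A P) (φ : Form A P) (D : Set M.S) (s : M.S) :
    Form.sat M (.pbox φ) D s ↔ ∀ χ : PosForm A P, Form.sat M (.ann χ.toForm φ) D s := by
  simp only [Form.sat, PosForm.sat_toForm]

end Form

variable {a b : A} {p : P} {m : ℕ}

-- The chain of the header: `a`-classes `{2i, 2i+1}`, `b`-classes `{0}` and `{2i+1, 2i+2}`.
open Classical in
noncomputable def chainClass (a b c : A) (x : ℕ) : ℕ :=
  if c = a then x / 2 else if c = b then (x + 1) / 2 else x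

-- An `abbrev`, so that its states are reducibly `ℕ` and `omega` sees them.
noncomputable abbrev chainModel (a b : A) (p : P) (m : ℕ) : EpiModel A P :=
  EpiModel.ofClasses (chainClass a b) fun q => {x | q = p ∧ (x = 1 ∨ x = 2 ∨ 2 * m + 4 ≤ x)}

theorem chainClass_eq_iff (hab : a ≠ b) {c : A} {x y : ℕ} :
    chainClass a b c x = chainClass a b c y ↔
      x = y ∨ (c = a ∧ x / 2 = y / 2) ∨ (c = b ∧ (x + 1) / 2 = (y + 1) / 2) := by
  unfold chainClass
  split_ifs with ha hb
  · subst ha; simp only [hab, true_and, false_and, or_false]; omega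
  · subst hb; simp only [ha, true_and, false_and, false_or]; omega
  · simp [ha, hb]

theorem chainModel_sat_mooreLike_iff (hab : a ≠ b) (D : Set ℕ) :
    Form.sat (chainModel a b p m) (mooreLike a b p) D 2 ↔ (0 ∈ D → 1 ∈ D → 3 ∈ D) := by
  simp only [mooreLike, Form.sat_imp, Form.sat, chainClass_eq_iff hab, hab, hab.symm,
    Set.mem_ofPred_eq, true_and, false_and, or_false, false_or]
  constructor
  · intro h h0 h1
    by_contra h3
    have hKa : ∀ t, 2 = t ∨ 2 / 2 = t / 2 → t ∈ D → t = 1 ∨ t = 2 ∨ 2 * m + 4 ≤ t := by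
      intro t ht htD
      obtain rfl | rfl : t = 2 ∨ t = 3 := by omega
      exacts [by omega, absurd htD h3]
    have := h hKa 1 (by omega) h1 0 (by omega) h0
    omega
  · intro h hKa y hy hyD z hz hzD
    obtain rfl | rfl : y = 1 ∨ y = 2 := by omega
    · obtain rfl | rfl : z = 0 ∨ z = 1 := by omega
      · have := hKa 3 (by omega) (h hzD hyD)
        omega
      · omega
    · exact hKa z hz hzD

-- `δ_j` of the header.
def chainProbe (a b : A) (p : P) : ℕ → PosForm A P
  | 0 => .know b (.natom p)
  | j + 1 => .know (if Even j then a else b) (.or (.atom p) (chainProbe a b p j))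

def chainSim (m k x y : ℕ) : Prop :=
  x = y ∨ (x = 0 ∧ 3 ≤ y ∧ y + k ≤ 2 * m + 3) ∨ (x = 1 ∧ y = 2 ∧ k ≤ 2 * m + 1)

theorem chainModel_boundedSim (hab : a ≠ b) :
    (chainModel a b p m).BoundedSim (chainSim m) where
  mem_val_iff := by
    rintro k x (y : ℕ) (rfl | ⟨rfl, hy, hk⟩ | ⟨rfl, rfl, -⟩) q
    · rfl
    · exact and_congr_right fun _ => by omega
    · exact and_congr_right fun _ => by omega
  back := by
    rintro k x (y : ℕ) (rfl | ⟨rfl, hy, hk⟩ | ⟨rfl, rfl, hk⟩) c (y' : ℕ) hyy'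
    · exact ⟨y', hyy', Or.inl rfl⟩
    · replace hyy' := (chainClass_eq_iff hab).1 hyy'
      by_cases hy' : 3 ≤ y'
      · exact ⟨0, rfl, Or.inr (Or.inl ⟨rfl, hy', by omega⟩)⟩
      obtain ⟨rfl, rfl, rfl⟩ : c = a ∧ y' = 2 ∧ y = 3 := by
        rcases hyy' with h | ⟨rfl, h⟩ | ⟨rfl, h⟩
        · omega
        · exact ⟨rfl, by omega, by omega⟩
        · omega
      exact ⟨1, (chainClass_eq_iff hab).2 (Or.inr (Or.inl ⟨rfl, rfl⟩)),
        Or.inr (Or.inr ⟨rfl, rfl, by omega⟩)⟩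
    · replace hyy' := (chainClass_eq_iff hab).1 hyy'
      by_cases hy' : y' = 2
      · subst hy'
        exact ⟨1, rfl, Or.inr (Or.inr ⟨rfl, rfl, by omega⟩)⟩
      rcases hyy' with h | ⟨rfl, h⟩ | ⟨rfl, h⟩
      · omega
      · obtain rfl : y' = 3 := by omega
        exact ⟨0, (chainClass_eq_iff hab).2 (Or.inr (Or.inl ⟨rfl, rfl⟩)),
          Or.inr (Or.inl ⟨rfl, le_rfl, by omega⟩)⟩
      · exact ⟨y', (chainClass_eq_iff hab).2 (Or.inr (Or.inr ⟨rfl, by omega⟩)), Or.inl rfl⟩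

theorem sat_chainProbe_zero (hab : a ≠ b) (j : ℕ) :
    PosForm.sat (chainModel a b p m) (chainProbe a b p j) Set.univ 0 := by
  induction j with
  | zero =>
    intro (t : ℕ) ht _
    obtain rfl : t = 0 := by
      rcases (chainClass_eq_iff hab).1 ht with h | ⟨h, -⟩ | ⟨-, h⟩
      exacts [h.symm, absurd h hab.symm, by omega]
    rintro ⟨-, h⟩
    omega
  | succ j ih =>
    intro (t : ℕ) ht _
    have ht : t ≤ 1 := by
      rcases (chainClass_eq_iff hab).1 ht with h | ⟨-, h⟩ | ⟨-, h⟩ <;> omega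
    interval_cases t
    exacts [Or.inr ih, Or.inl ⟨rfl, Or.inl rfl⟩]

theorem not_sat_chainProbe (hab : a ≠ b) {j y : ℕ} (hy : 3 ≤ y) (hyj : y + j = 2 * m + 3) :
    ¬ PosForm.sat (chainModel a b p m) (chainProbe a b p j) Set.univ y := by
  induction j generalizing y with
  | zero =>
    intro h
    exact h (y + 1) ((chainClass_eq_iff hab).2 (Or.inr (Or.inr ⟨rfl, by omega⟩))) trivial
      ⟨rfl, by omega⟩
  | succ j ih =>
    intro h
    have hrel : (chainModel a b p m).rel (if Even j then a else b) y (y + 1) := by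
      split_ifs with hj
      · rw [Nat.even_iff] at hj
        exact (chainClass_eq_iff hab).2 (Or.inr (Or.inl ⟨rfl, by omega⟩))
      · rw [Nat.not_even_iff] at hj
        exact (chainClass_eq_iff hab).2 (Or.inr (Or.inr ⟨rfl, by omega⟩))
    rcases h (y + 1) hrel trivial with ⟨-, hp⟩ | hδ
    · omega
    · exact ih (by omega) (by omega) hδ

theorem chainModel_sat_ann_mooreLike (hab : a ≠ b) (ψ : PosForm A P) (hψ : ψ.depth ≤ 2 * m) :
    Sat (chainModel a b p m) (2 : ℕ) (.ann ψ.toForm (mooreLike a b p)) := by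
  intro _
  rw [chainModel_sat_mooreLike_iff hab]
  rintro ⟨-, h0⟩ -
  refine ⟨trivial, ?_⟩
  rw [PosForm.sat_toForm] at h0 ⊢
  exact PosForm.sat_of_boundedSim (chainModel_boundedSim hab) ψ
    (Or.inr (Or.inl ⟨rfl, le_rfl, by omega⟩)) hψ h0

theorem chainModel_sat_not_pbox_mooreLike (hab : a ≠ b) :
    Sat (chainModel a b p m) (2 : ℕ) (.neg (.pbox (mooreLike a b p))) := by
  intro h
  have h' := h (.or (.atom p) (chainProbe a b p (2 * m))) (Or.inl ⟨rfl, Or.inr (Or.inl rfl)⟩)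
  rw [chainModel_sat_mooreLike_iff hab] at h'
  obtain ⟨-, ⟨-, h3⟩ | h3⟩ :=
    h' ⟨trivial, Or.inr (sat_chainProbe_zero hab _)⟩ ⟨trivial, Or.inl ⟨rfl, Or.inl rfl⟩⟩
  · omega
  · exact not_sat_chainProbe hab le_rfl (by omega) h3

end

theorem papal_not_compact_general
    (A P : Type)
    (a b : A) (hab : a ≠ b) (p : P) :
    (¬ ∃ (M : EpiModel A P) (s : M.S), ∀ f ∈ PhiSet a b p, Sat M s f) ∧
    (∀ Γ : Set (Form A P), Γ ⊆ PhiSet a b p → Γ.Finite →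
      ∃ (M : EpiModel A P) (s : M.S), ∀ f ∈ Γ, Sat M s f) := by
  refine ⟨fun ⟨M, s, hM⟩ => hM _ (Or.inr rfl) ?_, fun Γ hΓ hΓfin => ?_⟩
  · exact (Form.sat_pbox_iff M _ _ s).2 fun χ => hM _ (Or.inl ⟨χ, rfl⟩)
  · have hann : Function.Injective fun ψ : PosForm A P => Form.ann ψ.toForm (mooreLike a b p) :=
      fun _ _ h => PosForm.toForm_injective (Form.ann.inj h).1
    obtain ⟨m, hm⟩ := ((hΓfin.preimage hann.injOn).image PosForm.depth).bddAbove
    refine ⟨chainModel a b p m, (2 : ℕ), fun f hf => ?_⟩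
    rcases hΓ hf with ⟨ψ, rfl⟩ | rfl
    · exact chainModel_sat_ann_mooreLike hab ψ ((hm ⟨ψ, hf, rfl⟩).trans (by omega))
    · exact chainModel_sat_not_pbox_mooreLike hab

/-- PAPAL is not compact: the set Φ is unsatisfiable, while
every finite subset of Φ is satisfiable. -/
theorem papal_not_compact
    (A P : Type) [Countable A] [Countable P] [Infinite P]
    (a b : A) (hab : a ≠ b) (p : P) :
    (¬ ∃ (M : EpiModel A P) (s : M.S), ∀ f ∈ PhiSet a b p, Sat M s f) ∧
    (∀ Γ : Set (Form A P), Γ ⊆ PhiSet a b p → Γ.Finite →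
      ∃ (M : EpiModel A P) (s : M.S), ∀ f ∈ Γ, Sat M s f) :=
  papal_not_compact_general A P a b hab p
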